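/- Let M be an n × 2^t complex matrix of rank 2^r admitting a full rank matchgate realizer, meaning there is a matrix A with rank(A·M) = 2^r, and suppose invertible matrices B, C put A·M into canonical form: every nonzero column of B·A·M·C has column index (a t-bit string) whose last t−r bits are all 1. Then every nonzero column of M·C likewise has index whose last t−r bits all equal 1, and the n × 2^r matrix N obtained from M·C by keeping only the columns whose last t−r bits are 1 satisfies rank(N) = 2^r. -/

import Mathlib

/-- Restrict a matrix with columns indexed by length-`t` bit strings to the columns
whose last `t - r` bits are all `true`. -/
def collapseCols (n t r : ℕ) (M : Matrix (Fin n) (Fin t → Bool) ℂ) :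
    Matrix (Fin n) (Fin r → Bool) ℂ :=
  fun x z => M x (fun i => if h : (i : ℕ) < r then z ⟨i, h⟩ else true)

/-!
Since `rank (A * M) = rank M`, the matrix `A` is injective on the column space of `M`. Each
column of `B * (A * M) * C` is `B * A` applied to the corresponding column of `M * C`, which lies
in that column space; as `B` is invertible, the zero columns of `B * (A * M) * C` and of `M * C`
coincide. So `M * C` is supported on the columns kept by `collapseCols`, and dropping zero
columns preserves the rank, which equals `rank M` because `C` is invertible.
-/

open Matrix

namespace Matrix

variable {K m n o : Type*} [Field K]

theorem mulVec_eq_zero_of_rank_le_rank_mul [Fintype n] [Fintype o]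
    (A : Matrix m n K) (M : Matrix n o K) (h : M.rank ≤ (A * M).rank) {v : o → K}
    (hv : A *ᵥ (M *ᵥ v) = 0) : M *ᵥ v = 0 := by
  have hmap : (LinearMap.range M.mulVecLin).map A.mulVecLin = LinearMap.range (A * M).mulVecLin :=
    by rw [mulVecLin_mul, LinearMap.range_comp]
  have hdisj : Disjoint (LinearMap.range M.mulVecLin) (LinearMap.ker A.mulVecLin) :=
    Submodule.disjoint_ker_of_finrank_le _ (hmap ▸ h)
  exact Submodule.disjoint_def.mp hdisj _ ⟨v, rfl⟩ hv

theorem mulVec_eq_zero_of_isUnit_of_rank_le_rank_mul {p : Type*} [Fintype n] [Fintype o]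
    [Fintype m] [DecidableEq m] [Fintype p] {A : Matrix m n K} {M : Matrix n o K}
    {B : Matrix m m K} {C : Matrix o p K} (hB : IsUnit B) (h : M.rank ≤ (A * M).rank)
    {v : p → K} (hv : (B * (A * M) * C) *ᵥ v = 0) : (M * C) *ᵥ v = 0 := by
  simp only [← mulVec_mulVec] at hv ⊢
  refine mulVec_eq_zero_of_rank_le_rank_mul A M h (mulVec_injective_of_isUnit hB ?_)
  rw [hv, mulVec_zero]

theorem rank_submatrix_id_eq_of_col_ne_zero {n₀ : Type*} [Fintype n] [Fintype n₀]
    (P : Matrix m n K) (f : n₀ → n) (hf : ∀ j, P.col j ≠ 0 → j ∈ Set.range f) :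
    (P.submatrix id f).rank = P.rank := by
  have hspan : Submodule.span K (Set.range (P.submatrix id f).col) =
      Submodule.span K (Set.range P.col) := by
    refine le_antisymm (Submodule.span_mono ?_) ?_
    · rintro _ ⟨z, rfl⟩
      exact ⟨f z, rfl⟩
    · rw [← Submodule.span_insert_zero (s := Set.range (P.submatrix id f).col)]
      refine Submodule.span_mono ?_
      rintro _ ⟨j, rfl⟩
      by_cases hj : P.col j = 0
      · exact Or.inl hj
      · obtain ⟨z, rfl⟩ := hf j hj
        exact Or.inr ⟨z, rfl⟩
  rw [rank_eq_finrank_span_cols, rank_eq_finrank_span_cols, hspan]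

end Matrix

def padTrue (r t : ℕ) (z : Fin r → Bool) : Fin t → Bool :=
  fun i => if h : (i : ℕ) < r then z ⟨i, h⟩ else true

theorem collapseCols_eq_submatrix (n t r : ℕ) (M : Matrix (Fin n) (Fin t → Bool) ℂ) :
    collapseCols n t r M = M.submatrix id (padTrue r t) :=
  rfl

theorem mem_range_padTrue {r t : ℕ} (hr : r ≤ t) {y : Fin t → Bool}
    (hy : ∀ i : Fin t, r ≤ (i : ℕ) → y i = true) : y ∈ Set.range (padTrue r t) := by
  refine ⟨fun j => y (Fin.castLE hr j), funext fun i => ?_⟩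
  by_cases hi : (i : ℕ) < r
  · simp [padTrue, hi]
  · simp [padTrue, hi, hy i (not_lt.mp hi)]

theorem base_collapse (n t r m : ℕ) (hr : r ≤ t)
    (M : Matrix (Fin n) (Fin t → Bool) ℂ)
    (A : Matrix (Fin m) (Fin n) ℂ)
    (B : Matrix (Fin m) (Fin m) ℂ)
    (C : Matrix (Fin t → Bool) (Fin t → Bool) ℂ)
    (hMrank : M.rank = 2 ^ r) (hAMrank : (A * M).rank = 2 ^ r)
    (hB : IsUnit B) (hC : IsUnit C)
    (hcanon : ∀ (x : Fin m) (y : Fin t → Bool), (B * (A * M) * C) x y ≠ 0 →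
      ∀ i : Fin t, r ≤ (i : ℕ) → y i = true) :
    (∀ (x : Fin n) (y : Fin t → Bool), (M * C) x y ≠ 0 →
      ∀ i : Fin t, r ≤ (i : ℕ) → y i = true) ∧
    (collapseCols n t r (M * C)).rank = 2 ^ r := by
  classical
  have hsupp : ∀ (x : Fin n) (y : Fin t → Bool), (M * C) x y ≠ 0 →
      ∀ i : Fin t, r ≤ (i : ℕ) → y i = true := by
    intro x y hxy i hi
    by_contra hbad
    have hcol : (B * (A * M) * C) *ᵥ Pi.single y 1 = 0 := by
      funext k
      rw [Matrix.mulVec_single_one]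
      exact not_not.mp fun hk => hbad (hcanon k y hk i hi)
    have hcol' := Matrix.mulVec_eq_zero_of_isUnit_of_rank_le_rank_mul hB
      (hMrank.trans hAMrank.symm).le hcol
    rw [Matrix.mulVec_single_one] at hcol'
    exact hxy (congrFun hcol' x)
  refine ⟨hsupp, ?_⟩
  rw [collapseCols_eq_submatrix, Matrix.rank_submatrix_id_eq_of_col_ne_zero,
    Matrix.rank_mul_eq_left_of_isUnit_det C M ((Matrix.isUnit_iff_isUnit_det C).mp hC), hMrank]
  intro y hy
  obtain ⟨x, hx⟩ := Function.ne_iff.mp hy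
  exact mem_range_padTrue hr (hsupp x y hx)
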